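/- Let U ∈ ℝ^{n×r} have orthonormal columns and satisfy the strong incoherence property: |⟨e_i, UUᵀe_j⟩ − (r/n)·1_{i=j}| ≤ μ₁√r/n for all 1 ≤ i, j ≤ n. Then for every d ≥ r and every subset S ⊆ {1,…,n} with |S| = d, ‖(n/d)·∑_{k∈S} U^k(U^k)ᵀ − I‖ ≤ μ₁√r, where ‖·‖ is the spectral norm. Consequently, any rank-r matrix M = UΣVᵀ whose singular-vector factors U and V both satisfy the strong incoherence property satisfies assumption A2 with δ_d ≤ μ₁√r for all d ≥ r. -/

import Mathlib

open Matrix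
open scoped BigOperators

noncomputable section

/-- Euclidean norm of a vector. -/
def vecNorm {β : Type*} [Fintype β] (x : β → ℝ) : ℝ :=
  Real.sqrt (∑ i, x i ^ 2)

/-- Spectral norm (largest singular value) of a real matrix. -/
def specNorm {α β : Type*} [Fintype α] [Fintype β] (A : Matrix α β ℝ) : ℝ :=
  sSup {c | ∃ x : β → ℝ, vecNorm x ≤ 1 ∧ c = vecNorm (A.mulVec x)}

/-- Second largest singular value of a real matrix (Courant–Fischer characterization). -/
def sigma2 {α β : Type*} [Fintype α] [Fintype β] (A : Matrix α β ℝ) : ℝ :=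
  ⨅ v : β → ℝ, sSup {c | ∃ x : β → ℝ,
    vecNorm x ≤ 1 ∧ (∑ i, v i * x i) = 0 ∧ c = vecNorm (A.mulVec x)}

/-- Frobenius norm. -/
def frobNorm {α β : Type*} [Fintype α] [Fintype β] (A : Matrix α β ℝ) : ℝ :=
  Real.sqrt (∑ i, ∑ j, A i j ^ 2)

/-- Nuclear norm: the sum of the singular values, i.e. the trace of `√(AᵀA)`. -/
def nuclearNorm {α β : Type*} [Fintype α] [Fintype β] [DecidableEq β]
    (A : Matrix α β ℝ) : ℝ :=
  ((Matrix.isHermitian_conjTranspose_mul_self A).eigenvectorUnitary * Matrix.diagonal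
      ((RCLike.ofReal : ℝ → ℝ) ∘ Real.sqrt ∘ (Matrix.isHermitian_conjTranspose_mul_self A).eigenvalues) *
      (star (Matrix.isHermitian_conjTranspose_mul_self A).eigenvectorUnitary : Matrix β β ℝ)).trace

/-- The sampling operator `P_Ω`. -/
def sampl {n : ℕ} (Ω : Finset (Fin n × Fin n)) (M : Matrix (Fin n) (Fin n) ℝ) :
    Matrix (Fin n) (Fin n) ℝ :=
  Matrix.of fun i j => if (i, j) ∈ Ω then M i j else 0

/-- The biadjacency matrix `G` of the bipartite graph with edge set `Ω`. -/
def biadj {n : ℕ} (Ω : Finset (Fin n × Fin n)) : Matrix (Fin n) (Fin n) ℝ :=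
  Matrix.of fun i j => if (i, j) ∈ Ω then (1 : ℝ) else 0

/-- `Ω` is the edge set of a `d`-regular bipartite graph: every row and every column
of `G` has exactly `d` ones. -/
def RegularSampling {n : ℕ} (Ω : Finset (Fin n × Fin n)) (d : ℕ) : Prop :=
  (∀ i : Fin n, (Finset.univ.filter fun j => (i, j) ∈ Ω).card = d) ∧
  (∀ j : Fin n, (Finset.univ.filter fun i => (i, j) ∈ Ω).card = d)

/-- Assumption G1: the all-ones vector is a top left- and right-singular vector of `G`,
with `σ₁(G) = d`. -/
def AssumptionG1 {n : ℕ} (Ω : Finset (Fin n × Fin n)) (d : ℕ) : Prop :=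
  specNorm (biadj Ω) = d ∧
  (biadj Ω).mulVec (fun _ => 1) = (fun _ => (d : ℝ)) ∧
  Matrix.vecMul (fun _ => 1) (biadj Ω) = (fun _ => (d : ℝ))

/-- Assumption G2: `σ₂(G) ≤ C·√d`. -/
def AssumptionG2 {n : ℕ} (Ω : Finset (Fin n × Fin n)) (d : ℕ) (C : ℝ) : Prop :=
  sigma2 (biadj Ω) ≤ C * Real.sqrt d

/-- Assumption A1 (`μ₀`-incoherence) for one factor: every row `U^i` satisfies
`‖U^i‖² ≤ μ₀ r / n`. -/
def IncoherentRows {n r : ℕ} (U : Matrix (Fin n) (Fin r) ℝ) (μ₀ : ℝ) : Prop :=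
  ∀ i : Fin n, (∑ k, U i k ^ 2) ≤ μ₀ * r / n

/-- Assumption A2 (strong incoherence with parameter `δ`) for one factor:
for every `S` with `|S| = d`, `‖(n/d)·∑_{k∈S} U^k (U^k)ᵀ − I‖ ≤ δ`. -/
def StrongIncoherence {n r : ℕ} (U : Matrix (Fin n) (Fin r) ℝ) (d : ℕ) (δ : ℝ) : Prop :=
  ∀ S : Finset (Fin n), S.card = d →
    specNorm (((n : ℝ) / (d : ℝ)) • (∑ k ∈ S, Matrix.vecMulVec (U k) (U k)) - 1) ≤ δ

/-- `M = U · diagonal s · Vᵀ` is a thin SVD of the rank-`r` matrix `M`. -/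
def IsThinSVD {n r : ℕ} (M : Matrix (Fin n) (Fin n) ℝ)
    (U : Matrix (Fin n) (Fin r) ℝ) (s : Fin r → ℝ) (V : Matrix (Fin n) (Fin r) ℝ) : Prop :=
  Uᵀ * U = 1 ∧ Vᵀ * V = 1 ∧ (∀ i, 0 < s i) ∧ M = U * Matrix.diagonal s * Vᵀ

/-- The projection `P_T` onto the subspace `T` spanned by matrices `UXᵀ` and `YVᵀ`. -/
def projT {n r : ℕ} (U V : Matrix (Fin n) (Fin r) ℝ) (Z : Matrix (Fin n) (Fin n) ℝ) :
    Matrix (Fin n) (Fin n) ℝ :=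
  U * Uᵀ * Z + Z * (V * Vᵀ) - U * Uᵀ * Z * (V * Vᵀ)

/-- The projection `P_{T⊥}` onto the orthogonal complement of `T`. -/
def projTperp {n r : ℕ} (U V : Matrix (Fin n) (Fin r) ℝ) (Z : Matrix (Fin n) (Fin n) ℝ) :
    Matrix (Fin n) (Fin n) ℝ :=
  (1 - U * Uᵀ) * Z * (1 - V * Vᵀ)

end

/-!
Write `w = U z` and `σ_T = ∑_{k ∈ T} w_k²`. The quadratic form of `(n/d) ∑_{k ∈ S} U^k (U^k)ᵀ - I`
at `z` is `(n/d) σ_S - ‖z‖²`, and `σ_S + σ_{Sᶜ} = ‖z‖²` because `U` is an isometry. Since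
`σ_T = ⟪∑_{k ∈ T} w_k U^k, z⟫` and the Gram matrix `U Uᵀ` of the rows is within `t/n` of
`(r/n) I` entrywise (`t = μ₁ √r`), Cauchy–Schwarz gives `n σ_T ≤ (r + |T| t) ‖z‖²`. For `T = S` this is the
upper bound; for `T = Sᶜ` it is the lower bound unless `t < 1` and `|Sᶜ| < r`. In that case the
Frobenius identity `∑ (U Uᵀ - (r/n) I)_{ij}² = r - r²/n ≤ t²` forces `n = r + 1` and `|Sᶜ| = 1`.
Then `I - U Uᵀ` is a rank-one projection, so products of its diagonal entries are squares of
entries of `U Uᵀ`, at most `t²/n²`; this bounds `(U Uᵀ)_kk ≤ (1 + r t)/n` for the row `k ∉ S`.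
-/

section DotProduct
variable {ι : Type*} [Fintype ι]

lemma dotProduct_self_nonneg (x : ι → ℝ) : 0 ≤ x ⬝ᵥ x :=
  Finset.sum_nonneg fun i _ => mul_self_nonneg (x i)

lemma dotProduct_sq_le (x y : ι → ℝ) : (x ⬝ᵥ y) ^ 2 ≤ (x ⬝ᵥ x) * (y ⬝ᵥ y) := by
  simpa only [dotProduct, sq] using Finset.sum_mul_sq_le_sq_mul_sq Finset.univ x y

lemma dotProduct_sum_smul_self_le {κ : Type*} [DecidableEq κ] (u : κ → ι → ℝ) (T : Finset κ)
    {c e : ℝ} (he : 0 ≤ e) (hu : ∀ k ∈ T, ∀ l ∈ T, |u k ⬝ᵥ u l - if k = l then c else 0| ≤ e)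
    (a : κ → ℝ) :
    (∑ k ∈ T, a k • u k) ⬝ᵥ (∑ k ∈ T, a k • u k) ≤ (c + T.card * e) * ∑ k ∈ T, a k ^ 2 := by
  have hdiag : ∑ k ∈ T, ∑ l ∈ T, a k * a l * (if k = l then c else 0)
      = c * ∑ k ∈ T, a k ^ 2 := by
    simp only [mul_ite, mul_zero, Finset.sum_ite_eq, Finset.mul_sum]
    exact Finset.sum_congr rfl fun k hk => by simp [hk, sq, mul_comm]
  have hoff : ∑ k ∈ T, ∑ l ∈ T, a k * a l * (u k ⬝ᵥ u l - if k = l then c else 0)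
      ≤ e * (∑ k ∈ T, |a k|) ^ 2 := by
    rw [sq, Finset.sum_mul_sum, Finset.mul_sum]
    refine Finset.sum_le_sum fun k hk => ?_
    rw [Finset.mul_sum]
    refine Finset.sum_le_sum fun l hl => ?_
    calc a k * a l * (u k ⬝ᵥ u l - if k = l then c else 0)
        ≤ |a k * a l * (u k ⬝ᵥ u l - if k = l then c else 0)| := le_abs_self _
      _ ≤ |a k| * |a l| * e := by rw [abs_mul, abs_mul]; gcongr; exact hu k hk l hl
      _ = e * (|a k| * |a l|) := by ring
  have hl1 : (∑ k ∈ T, |a k|) ^ 2 ≤ T.card * ∑ k ∈ T, a k ^ 2 := by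
    simpa only [sq_abs] using sq_sum_le_card_mul_sum_sq (s := T) (f := fun k => |a k|)
  calc (∑ k ∈ T, a k • u k) ⬝ᵥ (∑ k ∈ T, a k • u k)
      = ∑ k ∈ T, ∑ l ∈ T, a k * a l * (u k ⬝ᵥ u l) := by
        simp only [sum_dotProduct, dotProduct_sum, smul_dotProduct, dotProduct_smul, smul_eq_mul,
          Finset.mul_sum]
        exact Finset.sum_congr rfl fun k _ => Finset.sum_congr rfl fun l _ => by
          rw [dotProduct_comm]; ring
    _ = c * ∑ k ∈ T, a k ^ 2
          + ∑ k ∈ T, ∑ l ∈ T, a k * a l * (u k ⬝ᵥ u l - if k = l then c else 0) := by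
        rw [← hdiag, ← Finset.sum_add_distrib]
        refine Finset.sum_congr rfl fun k _ => ?_
        rw [← Finset.sum_add_distrib]
        simp only [mul_sub, add_sub_cancel]
    _ ≤ c * ∑ k ∈ T, a k ^ 2 + e * (T.card * ∑ k ∈ T, a k ^ 2) := by
        gcongr
        exact hoff.trans (by gcongr)
    _ = (c + T.card * e) * ∑ k ∈ T, a k ^ 2 := by ring

end DotProduct

section SpectralNorm
variable {ι : Type*} [Fintype ι]

lemma vecNorm_eq_norm_toLp (x : ι → ℝ) :
    vecNorm x = ‖(WithLp.toLp 2 x : EuclideanSpace ℝ ι)‖ := by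
  simp [vecNorm, EuclideanSpace.norm_eq]

variable [DecidableEq ι]

lemma specNorm_le_norm_toEuclideanCLM (A : Matrix ι ι ℝ) :
    specNorm A ≤ ‖toEuclideanCLM (𝕜 := ℝ) A‖ := by
  refine Real.sSup_le ?_ (norm_nonneg _)
  rintro c ⟨x, hx, rfl⟩
  rw [vecNorm_eq_norm_toLp] at hx ⊢
  exact (toEuclideanCLM (𝕜 := ℝ) A).unit_le_opNorm _ hx

lemma specNorm_le_of_isSymm {A : Matrix ι ι ℝ} (hA : A.IsSymm) {C : ℝ} (hC : 0 ≤ C)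
    (h : ∀ x, |x ⬝ᵥ A *ᵥ x| ≤ C * (x ⬝ᵥ x)) : specNorm A ≤ C := by
  set T := toEuclideanCLM (𝕜 := ℝ) A
  have hT : (T : EuclideanSpace ℝ ι →ₗ[ℝ] EuclideanSpace ℝ ι).IsSymmetric :=
    isSymmetric_toEuclideanLin_iff.2 hA
  refine (specNorm_le_norm_toEuclideanCLM A).trans ?_
  rw [T.norm_eq_iSup_rayleighQuotient hT]
  refine ciSup_le fun x => ?_
  have hquad : T.reApplyInnerSelf x = x.ofLp ⬝ᵥ A *ᵥ x.ofLp := by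
    simp [ContinuousLinearMap.reApplyInnerSelf_apply, real_inner_comm, T, inner_toEuclideanCLM]
  have hnorm : ‖x‖ ^ 2 = x.ofLp ⬝ᵥ x.ofLp := by
    rw [← real_inner_self_eq_norm_sq, EuclideanSpace.inner_eq_star_dotProduct, star_trivial]
  have hx := dotProduct_self_nonneg x.ofLp
  rw [ContinuousLinearMap.rayleighQuotient, hquad, hnorm, abs_div, abs_of_nonneg hx]
  exact div_le_of_le_mul₀ hx hC (h _)

end SpectralNorm

lemma sum_le_one_add_card_mul_of_mul_le_sq {ι : Type*} [DecidableEq ι] (J : Finset ι)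
    (a : ι → ℝ) {t : ℝ} (ht : 0 ≤ t) (h1 : ∀ j ∈ J, a j ≤ 1 + t)
    (hpair : ∀ j ∈ J, ∀ l ∈ J, j ≠ l → a j * a l ≤ t ^ 2) :
    ∑ j ∈ J, a j ≤ 1 + J.card * t := by
  by_cases hsmall : ∀ j ∈ J, a j ≤ t
  · have := Finset.sum_le_card_nsmul J a t hsmall
    rw [nsmul_eq_mul] at this
    linarith
  obtain ⟨j₀, hj₀, hbig⟩ : ∃ j ∈ J, t < a j := by simpa using hsmall
  set b := a j₀
  have hJ : 0 < J.card := Finset.card_pos.2 ⟨j₀, hj₀⟩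
  have hrest : b * ∑ j ∈ J.erase j₀, a j ≤ (J.card - 1) * t ^ 2 := by
    rw [Finset.mul_sum, ← Nat.cast_pred hJ, ← Finset.card_erase_of_mem hj₀, ← nsmul_eq_mul]
    exact Finset.sum_le_card_nsmul _ _ _ fun j hj =>
      hpair j₀ hj₀ j (Finset.mem_of_mem_erase hj) (Finset.ne_of_mem_erase hj).symm
  have hcard : (1 : ℝ) ≤ J.card := by exact_mod_cast hJ
  have hb := h1 j₀ hj₀
  rw [← Finset.add_sum_erase J a hj₀]
  refine le_of_mul_le_mul_left ?_ (ht.trans_lt hbig)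
  -- `b² - (1 + |J| t) b + (|J| - 1) t²` is convex in `b` and `≤ 0` at `b = t` and `b = 1 + t`.
  nlinarith [mul_nonneg (sub_nonneg.2 hbig.le) (sub_nonneg.2 hb),
    mul_nonneg (mul_nonneg (sub_nonneg.2 hcard) ht) (sub_nonneg.2 hbig.le),
    mul_nonneg ht (sub_nonneg.2 hb)]

section Projection
variable {ι : Type*} [Fintype ι] {P : Matrix ι ι ℝ}

lemma Matrix.IsSymm.apply_self_eq_sum_sq (hs : P.IsSymm) (hi : IsIdempotentElem P) (i : ι) :
    P i i = ∑ l, P i l ^ 2 := by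
  conv_lhs => rw [← hi.eq]
  simp only [mul_apply, sq, hs.apply]

lemma Matrix.IsSymm.sq_apply_le_mul_apply_self (hs : P.IsSymm) (hi : IsIdempotentElem P)
    (i j : ι) : P i j ^ 2 ≤ P i i * P j j := by
  have hij : P i j = ∑ l, P i l * P j l := by
    conv_lhs => rw [← hi.eq]
    simp only [mul_apply, hs.apply]
  rw [hij, hs.apply_self_eq_sum_sq hi, hs.apply_self_eq_sum_sq hi]
  exact Finset.sum_mul_sq_le_sq_mul_sq _ _ _

lemma Matrix.IsSymm.sum_sum_sq_eq_trace (hs : P.IsSymm) (hi : IsIdempotentElem P) :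
    ∑ i, ∑ j, P i j ^ 2 = P.trace := by
  simp only [trace, diag, hs.apply_self_eq_sum_sq hi]

lemma Matrix.IsSymm.sq_apply_eq_mul_apply_self_of_trace_eq_one (hs : P.IsSymm)
    (hi : IsIdempotentElem P) (htr : P.trace = 1) (i j : ι) : P i j ^ 2 = P i i * P j j := by
  -- The nonnegative gaps `P i i * P j j - P i j ^ 2` sum to `(trace P)² - trace P = 0`.
  have hsum : ∑ i, ∑ j, (P i i * P j j - P i j ^ 2) = 0 := by
    simp only [Finset.sum_sub_distrib, hs.sum_sum_sq_eq_trace hi, ← Finset.mul_sum,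
      ← Finset.sum_mul]
    rw [show ∑ i, P i i = P.trace from rfl, htr]
    norm_num
  have hgap : ∀ i j, 0 ≤ P i i * P j j - P i j ^ 2 := fun i j =>
    sub_nonneg.2 (hs.sq_apply_le_mul_apply_self hi i j)
  have hrow := (Finset.sum_eq_zero_iff_of_nonneg fun i _ =>
    Finset.sum_nonneg fun j _ => hgap i j).1 hsum i (Finset.mem_univ i)
  have := (Finset.sum_eq_zero_iff_of_nonneg fun j _ => hgap i j).1 hrow j (Finset.mem_univ j)
  linarith

lemma Matrix.IsSymm.sum_sum_sub_diagonal_sq [DecidableEq ι] (hs : P.IsSymm)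
    (hi : IsIdempotentElem P) (c : ℝ) :
    ∑ i, ∑ j, (P i j - if i = j then c else 0) ^ 2
      = P.trace * (1 - 2 * c) + c ^ 2 * Fintype.card ι := by
  have h : ∀ i j, (P i j - if i = j then c else 0) ^ 2
      = P i j ^ 2 - 2 * c * (if i = j then P i j else 0) + (if i = j then c ^ 2 else 0) := by
    intro i j; split_ifs <;> ring
  simp only [h, Finset.sum_add_distrib, Finset.sum_sub_distrib, ← Finset.mul_sum,
    Finset.sum_ite_eq, Finset.mem_univ, if_true, hs.sum_sum_sq_eq_trace hi, Finset.sum_const,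
    Finset.card_univ, nsmul_eq_mul]
  simp only [trace, diag]; ring

end Projection

section OrthonormalColumns
variable {m κ : Type*} [Fintype κ] {U : Matrix m κ ℝ}

lemma isSymm_mul_transpose (U : Matrix m κ ℝ) : (U * Uᵀ).IsSymm := by
  simp [IsSymm, transpose_mul]

lemma sq_mulVec_apply_le (U : Matrix m κ ℝ) (z : κ → ℝ) (k : m) :
    (U *ᵥ z) k ^ 2 ≤ (U * Uᵀ) k k * (z ⬝ᵥ z) :=
  dotProduct_sq_le (U k) z

lemma sum_sq_mulVec_le [DecidableEq m] {c e : ℝ} (hc : 0 ≤ c) (he : 0 ≤ e)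
    (hP : ∀ i j, |(U * Uᵀ) i j - if i = j then c else 0| ≤ e) (T : Finset m) (z : κ → ℝ) :
    ∑ k ∈ T, (U *ᵥ z) k ^ 2 ≤ (c + T.card * e) * (z ⬝ᵥ z) := by
  set σ := ∑ k ∈ T, (U *ᵥ z) k ^ 2
  set y := ∑ k ∈ T, (U *ᵥ z) k • U k
  have hσ : σ = y ⬝ᵥ z := by
    simp only [σ, y, sum_dotProduct, smul_dotProduct, smul_eq_mul, sq]; rfl
  have hy : y ⬝ᵥ y ≤ (c + T.card * e) * σ :=
    dotProduct_sum_smul_self_le (fun k => U k) T he (fun k _ l _ => hP k l) _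
  have hσ0 : 0 ≤ σ := Finset.sum_nonneg fun k _ => sq_nonneg _
  have hz := dotProduct_self_nonneg z
  have hcs : σ * σ ≤ σ * ((c + T.card * e) * (z ⬝ᵥ z)) :=
    calc σ * σ = (y ⬝ᵥ z) ^ 2 := by rw [hσ, sq]
      _ ≤ (y ⬝ᵥ y) * (z ⬝ᵥ z) := dotProduct_sq_le y z
      _ ≤ (c + T.card * e) * σ * (z ⬝ᵥ z) := by gcongr
      _ = σ * ((c + T.card * e) * (z ⬝ᵥ z)) := by ring
  rcases hσ0.eq_or_lt with h0 | hpos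
  · rw [← h0]; positivity
  · exact le_of_mul_le_mul_left hcs hpos

variable [Fintype m] [DecidableEq κ] (hU : Uᵀ * U = 1)
include hU

lemma dotProduct_mulVec_self_of_transpose_mul_self_eq_one (z : κ → ℝ) :
    U *ᵥ z ⬝ᵥ U *ᵥ z = z ⬝ᵥ z := by
  rw [dotProduct_mulVec, ← mulVec_transpose, mulVec_mulVec, hU, one_mulVec]

lemma sum_sq_mulVec_le_dotProduct_self (T : Finset m) (z : κ → ℝ) :
    ∑ k ∈ T, (U *ᵥ z) k ^ 2 ≤ z ⬝ᵥ z := by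
  rw [← dotProduct_mulVec_self_of_transpose_mul_self_eq_one hU z]
  simpa only [dotProduct, sq] using
    Finset.sum_le_univ_sum_of_nonneg fun k => mul_self_nonneg ((U *ᵥ z) k)

lemma isIdempotentElem_mul_transpose : IsIdempotentElem (U * Uᵀ) := by
  rw [IsIdempotentElem, Matrix.mul_assoc, ← Matrix.mul_assoc Uᵀ, hU, Matrix.one_mul]

lemma trace_mul_transpose : (U * Uᵀ).trace = Fintype.card κ := by
  rw [trace_mul_comm, hU, trace_one]

lemma card_le_card_of_transpose_mul_self_eq_one : Fintype.card κ ≤ Fintype.card m :=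
  calc Fintype.card κ = (Uᵀ * U).rank := by rw [hU, rank_one]
    _ ≤ Fintype.card m := (rank_mul_le_left _ _).trans (rank_le_card_width _)

end OrthonormalColumns

section RowGram
variable {m κ : Type*} [DecidableEq κ] (U : Matrix m κ ℝ) (c : ℝ) (S : Finset m)

lemma isSymm_smul_sum_vecMulVec_sub_one :
    (c • ∑ k ∈ S, vecMulVec (U k) (U k) - 1).IsSymm :=
  ((IsSymm.ext fun i j => by simp [Matrix.sum_apply, vecMulVec_apply, mul_comm]).smul c).sub
    isSymm_one

lemma dotProduct_smul_sum_vecMulVec_sub_one_mulVec [Fintype κ] (x : κ → ℝ) :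
    x ⬝ᵥ (c • ∑ k ∈ S, vecMulVec (U k) (U k) - 1) *ᵥ x
      = c * ∑ k ∈ S, (U *ᵥ x) k ^ 2 - x ⬝ᵥ x := by
  simp only [sub_mulVec, one_mulVec, smul_mulVec, sum_mulVec, vecMulVec_mulVec, dotProduct_sub,
    dotProduct_smul, dotProduct_sum]
  simp only [smul_eq_mul, op_smul_eq_smul, dotProduct_comm x, sq]
  rfl

end RowGram

/-- The paper's strong incoherence property of `U`, with `t = μ₁ √r`. -/
def StrongIncoherenceProperty {n r : ℕ} (U : Matrix (Fin n) (Fin r) ℝ) (t : ℝ) : Prop :=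
  ∀ i j, |(U * Uᵀ) i j - if i = j then (r : ℝ) / n else 0| ≤ t / n

namespace StrongIncoherenceProperty
variable {n r : ℕ} {U : Matrix (Fin n) (Fin r) ℝ} {t : ℝ}

lemma nonneg (hP : StrongIncoherenceProperty U t) (hn : 0 < n) : 0 ≤ t := by
  have h := (abs_nonneg _).trans (hP ⟨0, hn⟩ ⟨0, hn⟩)
  simpa using (le_div_iff₀ (by exact_mod_cast hn : (0 : ℝ) < n)).1 h

lemma mul_sub_le_mul_sq (hP : StrongIncoherenceProperty U t) (hU : Uᵀ * U = 1) (hn : 0 < n) :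
    (r : ℝ) * (n - r) ≤ n * t ^ 2 := by
  have hnR : (0 : ℝ) < n := by exact_mod_cast hn
  have hfrob := (isSymm_mul_transpose U).sum_sum_sub_diagonal_sq
    (isIdempotentElem_mul_transpose hU) ((r : ℝ) / n)
  rw [trace_mul_transpose hU, Fintype.card_fin, Fintype.card_fin] at hfrob
  have hle : ∑ i, ∑ j, ((U * Uᵀ) i j - if i = j then (r : ℝ) / n else 0) ^ 2
      ≤ ∑ _i : Fin n, ∑ _j : Fin n, (t / n) ^ 2 :=
    Finset.sum_le_sum fun i _ => Finset.sum_le_sum fun j _ =>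
      sq_le_sq' (abs_le.1 (hP i j)).1 (abs_le.1 (hP i j)).2
  simp only [Finset.sum_const, Finset.card_univ, Fintype.card_fin, nsmul_eq_mul, hfrob] at hle
  field_simp at hle
  linarith

lemma eq_succ_of_lt_one (hP : StrongIncoherenceProperty U t) (hU : Uᵀ * U = 1) (ht : 0 ≤ t)
    (ht1 : t < 1) (hr : 2 ≤ r) (hrn : r < n) : n = r + 1 := by
  by_contra hne
  have hr' : (2 : ℝ) ≤ r := by exact_mod_cast hr
  have hn' : (r : ℝ) + 2 ≤ n := by exact_mod_cast (show r + 2 ≤ n by omega)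
  have hfloor := hP.mul_sub_le_mul_sq hU (by omega)
  have ht2 : (n : ℝ) * t ^ 2 < n := by
    have : t ^ 2 < 1 := by nlinarith
    nlinarith
  nlinarith [mul_nonneg (show (0 : ℝ) ≤ r - 1 by linarith) (show (0 : ℝ) ≤ n - r - 2 by linarith)]

lemma natCast_mul_apply_self_le_of_eq_succ (hP : StrongIncoherenceProperty U t)
    (hU : Uᵀ * U = 1) (ht : 0 ≤ t) (hn : n = r + 1) (k : Fin n) :
    n * (U * Uᵀ) k k ≤ 1 + r * t := by
  set K : Matrix (Fin n) (Fin n) ℝ := 1 - U * Uᵀ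
  have hnR : (n : ℝ) = r + 1 := by exact_mod_cast hn
  have hn0 : (n : ℝ) ≠ 0 := by rw [hnR]; positivity
  have hKs : K.IsSymm := isSymm_one.sub (isSymm_mul_transpose U)
  have hKi : IsIdempotentElem K := (isIdempotentElem_mul_transpose hU).one_sub
  have hKtr : K.trace = 1 := by
    rw [trace_sub, trace_one, trace_mul_transpose hU, Fintype.card_fin, Fintype.card_fin, hnR]
    ring
  have hKdiag : ∀ j, K j j = 1 - (U * Uᵀ) j j := fun j => by simp [K]
  have hKoff : ∀ j l, j ≠ l → K j l = -(U * Uᵀ) j l := fun j l hjl => by simp [K, hjl]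
  have hsum := Finset.add_sum_erase Finset.univ (fun j => K j j) (Finset.mem_univ k)
  rw [show ∑ j, K j j = K.trace from rfl, hKtr, hKdiag] at hsum
  have hcard : ((Finset.univ.erase k).card : ℝ) = r := by
    rw [Finset.card_erase_of_mem (Finset.mem_univ k), Finset.card_univ, Fintype.card_fin, hn]
    simp
  have hdiag_le (j : Fin n) : n * K j j ≤ 1 + t := by
    have := (abs_le.1 (hP j j)).1
    rw [if_pos rfl] at this
    field_simp at this
    rw [hKdiag]
    linarith
  have hpair (j l : Fin n) (hjl : j ≠ l) : n * K j j * (n * K l l) ≤ t ^ 2 := by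
    have := sq_le_sq' (abs_le.1 (hP j l)).1 (abs_le.1 (hP j l)).2
    rw [if_neg hjl, sub_zero] at this
    calc n * K j j * (n * K l l) = n ^ 2 * K j l ^ 2 := by
          rw [hKs.sq_apply_eq_mul_apply_self_of_trace_eq_one hKi hKtr]; ring
      _ ≤ n ^ 2 * (t / n) ^ 2 := by rw [hKoff j l hjl, neg_sq]; gcongr
      _ = t ^ 2 := by field_simp
  have key := sum_le_one_add_card_mul_of_mul_le_sq (Finset.univ.erase k) (fun j => n * K j j) ht
    (fun j _ => hdiag_le j) (fun j _ l _ => hpair j l)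
  rwa [← Finset.mul_sum, hcard,
    show ∑ j ∈ Finset.univ.erase k, K j j = (U * Uᵀ) k k by linarith] at key

lemma natCast_mul_sum_sq_mulVec_le (hP : StrongIncoherenceProperty U t) (ht : 0 ≤ t)
    (T : Finset (Fin n)) (z : Fin r → ℝ) :
    n * ∑ k ∈ T, (U *ᵥ z) k ^ 2 ≤ (r + T.card * t) * (z ⬝ᵥ z) := by
  rcases Nat.eq_zero_or_pos n with rfl | hn
  · simpa [Finset.eq_empty_of_isEmpty T] using
      mul_nonneg (Nat.cast_nonneg r) (dotProduct_self_nonneg z)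
  have hnR : (0 : ℝ) < n := by exact_mod_cast hn
  have h := sum_sq_mulVec_le (by positivity) (by positivity) hP T z
  calc n * ∑ k ∈ T, (U *ᵥ z) k ^ 2 ≤ n * ((r / n + T.card * (t / n)) * (z ⬝ᵥ z)) := by gcongr
    _ = (r + T.card * t) * (z ⬝ᵥ z) := by field_simp

lemma natCast_mul_sum_sq_mulVec_le_of_add_card_le (hP : StrongIncoherenceProperty U t)
    (hU : Uᵀ * U = 1) (ht : 0 ≤ t) (C : Finset (Fin n)) (hC : r + C.card ≤ n) (z : Fin r → ℝ) :
    n * ∑ k ∈ C, (U *ᵥ z) k ^ 2 ≤ ((n - C.card) * t + C.card) * (z ⬝ᵥ z) := by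
  have hσ := sum_sq_mulVec_le_dotProduct_self hU C z
  have hz := dotProduct_self_nonneg z
  have hC' : (r : ℝ) + C.card ≤ n := by exact_mod_cast hC
  rcases le_or_gt 1 t with ht1 | ht1
  · have hgap : (0 : ℝ) ≤ (t - 1) * (n - C.card) * (z ⬝ᵥ z) :=
      mul_nonneg (mul_nonneg (sub_nonneg.2 ht1) (by linarith)) hz
    nlinarith
  rcases le_or_gt r C.card with hrC | hCr
  · have hrC' : (r : ℝ) ≤ C.card := by exact_mod_cast hrC
    refine (hP.natCast_mul_sum_sq_mulVec_le ht C z).trans (mul_le_mul_of_nonneg_right ?_ hz)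
    nlinarith [mul_nonneg (sub_nonneg.2 hrC') (sub_nonneg.2 ht1.le)]
  rcases C.eq_empty_or_nonempty with rfl | hne
  · simp only [Finset.sum_empty, Finset.card_empty, mul_zero, CharP.cast_eq_zero, sub_zero,
      add_zero]
    positivity
  have hCpos := hne.card_pos
  have hn : n = r + 1 := hP.eq_succ_of_lt_one hU ht ht1 (by omega) (by omega)
  obtain ⟨k, rfl⟩ : ∃ k, C = {k} := Finset.card_eq_one.1 (by omega)
  have hnR : (n : ℝ) = r + 1 := by exact_mod_cast hn
  calc n * ∑ k ∈ {k}, (U *ᵥ z) k ^ 2 = n * (U *ᵥ z) k ^ 2 := by rw [Finset.sum_singleton]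
    _ ≤ n * ((U * Uᵀ) k k * (z ⬝ᵥ z)) := by gcongr; exact sq_mulVec_apply_le U z k
    _ ≤ (1 + r * t) * (z ⬝ᵥ z) := by
        rw [← mul_assoc]; gcongr; exact hP.natCast_mul_apply_self_le_of_eq_succ hU ht hn k
    _ = _ := by rw [Finset.card_singleton, hnR]; push_cast; ring

lemma abs_div_mul_sum_sq_mulVec_sub_le (hP : StrongIncoherenceProperty U t) (hU : Uᵀ * U = 1)
    (ht : 0 ≤ t) (S : Finset (Fin n)) (hrS : r ≤ S.card) (hS : 0 < S.card) (z : Fin r → ℝ) :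
    |n / S.card * ∑ k ∈ S, (U *ᵥ z) k ^ 2 - z ⬝ᵥ z| ≤ t * (z ⬝ᵥ z) := by
  have hdn : S.card ≤ n := by simpa using S.card_le_univ
  have hd : (0 : ℝ) < S.card := by exact_mod_cast hS
  have hrd : (r : ℝ) ≤ S.card := by exact_mod_cast hrS
  have hz := dotProduct_self_nonneg z
  have hsplit : ∑ k ∈ S, (U *ᵥ z) k ^ 2 + ∑ k ∈ Sᶜ, (U *ᵥ z) k ^ 2 = z ⬝ᵥ z := by
    rw [Finset.sum_add_sum_compl, ← dotProduct_mulVec_self_of_transpose_mul_self_eq_one hU z]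
    simp only [dotProduct, sq]
  have hsplit' := congrArg ((n : ℝ) * ·) hsplit
  simp only [mul_add] at hsplit'
  have hup := hP.natCast_mul_sum_sq_mulVec_le ht S z
  have hlow := hP.natCast_mul_sum_sq_mulVec_le_of_add_card_le hU ht Sᶜ
    (by rw [Finset.card_compl, Fintype.card_fin]; omega) z
  rw [Finset.card_compl, Fintype.card_fin, Nat.cast_sub hdn, sub_sub_cancel] at hlow
  rw [abs_le, div_mul_eq_mul_div]
  constructor
  · rw [le_sub_iff_add_le, le_div_iff₀ hd]
    nlinarith
  · rw [sub_le_iff_le_add, div_le_iff₀ hd]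
    nlinarith [mul_le_mul_of_nonneg_right hrd hz]

lemma strongIncoherence (hP : StrongIncoherenceProperty U t) (hU : Uᵀ * U = 1) (ht : 0 ≤ t)
    {d : ℕ} (hrd : r ≤ d) : StrongIncoherence U d t := by
  intro S hS
  refine specNorm_le_of_isSymm (isSymm_smul_sum_vecMulVec_sub_one _ _ _) ht fun z => ?_
  rw [dotProduct_smul_sum_vecMulVec_sub_one_mulVec, ← hS]
  rcases Nat.eq_zero_or_pos S.card with h0 | hpos
  · obtain rfl : r = 0 := by omega
    simp [Subsingleton.elim z 0]
  · exact hP.abs_div_mul_sum_sq_mulVec_sub_le hU ht S (hS ▸ hrd) hpos z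

end StrongIncoherenceProperty

/-- strong incoherence property (SIP) implies assumption A2 with
`δ_d ≤ μ₁ √r` for all `d ≥ r` (Claim 1); consequently any rank-`r` matrix `M = UΣVᵀ`
whose factors both satisfy SIP satisfies A2. -/
theorem stmt_4 {n r : ℕ} {μ₁ : ℝ} (U V : Matrix (Fin n) (Fin r) ℝ)
    (hU : Uᵀ * U = 1) (hV : Vᵀ * V = 1)
    (hSIPU : ∀ i j : Fin n,
      |(U * Uᵀ) i j - (if i = j then (r : ℝ) / n else 0)| ≤ μ₁ * Real.sqrt r / n)
    (hSIPV : ∀ i j : Fin n,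
      |(V * Vᵀ) i j - (if i = j then (r : ℝ) / n else 0)| ≤ μ₁ * Real.sqrt r / n) :
    ∀ d : ℕ, r ≤ d →
      StrongIncoherence U d (μ₁ * Real.sqrt r) ∧
      StrongIncoherence V d (μ₁ * Real.sqrt r) := by
  intro d hrd
  have hPU : StrongIncoherenceProperty U (μ₁ * Real.sqrt r) := hSIPU
  have hPV : StrongIncoherenceProperty V (μ₁ * Real.sqrt r) := hSIPV
  have ht : 0 ≤ μ₁ * Real.sqrt r := by
    rcases Nat.eq_zero_or_pos r with rfl | hr
    · simp
    · exact hPU.nonneg <| hr.trans_le <| by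
        simpa using card_le_card_of_transpose_mul_self_eq_one hU
  exact ⟨hPU.strongIncoherence hU ht hrd, hPV.strongIncoherence hV ht hrd⟩
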